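/- (Two-fold recurrence for the Watson sum.) For b, c ∈ ℂ and a natural number n define Σ(n) := ∑_{k=0}^{n} ((−n)_k (b)_k (c)_k)/(((−n+b+1)/2)_k (2c)_k · k!), assuming ((−n+b+1)/2)_k ≠ 0 and (2c)_k ≠ 0 for all 0 ≤ k ≤ n (for all n involved). Then for every n ≥ 2: (b − 2c − n + 1)·(n − 1)·Σ(n−2) − (b − n + 1)·(2c + n − 1)·Σ(n) = 0. -/

import Mathlib

/-- Pochhammer symbol (shifted factorial) of a complex number. -/
noncomputable def poch (a : ℂ) (k : ℕ) : ℂ := ∏ j ∈ Finset.range k, (a + j)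

/-- Watson's ₃F₂ sum at argument 1. -/
noncomputable def watsonSum (b c : ℂ) (n : ℕ) : ℂ :=
  ∑ k ∈ Finset.range (n + 1),
    poch (-(n : ℂ)) k * poch b k * poch c k /
      (poch ((-(n : ℂ) + b + 1) / 2) k * poch (2 * c) k * (k.factorial : ℂ))


lemma poch_succ (a : ℂ) (k : ℕ) : poch a (k+1) = poch a k * (a + k) :=
  Finset.prod_range_succ _ _

lemma poch_succ' (a : ℂ) (k : ℕ) : poch a (k+1) = a * poch (a+1) k := by
  unfold poch
  rw [Finset.prod_range_succ']
  simp only [Nat.cast_zero, add_zero, Nat.cast_add, Nat.cast_one]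
  rw [mul_comm]
  congr 1
  apply Finset.prod_congr rfl
  intro j _
  ring

lemma poch_shift (a : ℂ) (k : ℕ) : a * poch (a+1) k = poch a k * (a + k) := by
  rw [← poch_succ', poch_succ]

lemma poch_one (a : ℂ) : poch a 1 = a := by simp [poch]

lemma poch_neg_nat_eq_zero (m k : ℕ) (hm : m < k) : poch (-(m:ℂ)) k = 0 := by
  unfold poch
  apply Finset.prod_eq_zero (Finset.mem_range.mpr hm)
  simp

noncomputable def wT (b c : ℂ) (n k : ℕ) : ℂ :=
  poch (-(n : ℂ)) k * poch b k * poch c k /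
    (poch ((-(n : ℂ) + b + 1) / 2) k * poch (2 * c) k * (k.factorial : ℂ))

noncomputable def wG (b c : ℂ) (n k : ℕ) : ℂ :=
  (b - (n : ℂ) + 1) * (k : ℂ) * (2 * c + (k : ℂ) - 1) / (n : ℂ) * wT b c n k

lemma wkey (b c : ℂ) (n k : ℕ) (hn : 2 ≤ n) (hk : k + 1 ≤ n)
    (hPs : poch ((-(n:ℂ)+b+1)/2) k ≠ 0) (hQ : poch (2*c) k ≠ 0)
    (hPs1 : poch ((-(n:ℂ)+b+1)/2) (k+1) ≠ 0) (hQ1 : poch (2*c) (k+1) ≠ 0)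
    (hs : (-(n:ℂ)+b+1)/2 ≠ 0) :
    (b - 2*c - (n:ℂ) + 1) * ((n:ℂ) - 1) * wT b c (n-2) k
      - (b - (n:ℂ) + 1) * (2*c + (n:ℂ) - 1) * wT b c n k
      = wG b c n (k+1) - wG b c n k := by
  have hN0 : (n:ℂ) ≠ 0 := Nat.cast_ne_zero.mpr (by omega)
  have hN1 : -(n:ℂ)+1 ≠ 0 := by
    intro h0
    have h1 : (n:ℂ) = 1 := by linear_combination -h0
    have h2 : n = 1 := Nat.cast_eq_one.mp h1
    omega
  have hsk : (-(n:ℂ)+b+1)/2 + k ≠ 0 := fun h0 => hPs1 (by rw [poch_succ, h0, mul_zero])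
  have hck : 2*c + k ≠ 0 := fun h0 => hQ1 (by rw [poch_succ, h0, mul_zero])
  have hfac : (k.factorial : ℂ) ≠ 0 := Nat.cast_ne_zero.mpr k.factorial_ne_zero
  have hk1 : ((k:ℂ)+1) ≠ 0 := by
    have : ((k+1:ℕ):ℂ) ≠ 0 := Nat.cast_ne_zero.mpr (Nat.succ_ne_zero k)
    push_cast at this; exact this
  have hc2 : ((n-2:ℕ):ℂ) = (n:ℂ) - 2 := by
    rw [Nat.cast_sub hn]; norm_num
  have hX : (-(n:ℂ)) * (-(n:ℂ)+1) * poch (-(n:ℂ)+2) k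
      = poch (-(n:ℂ)) k * (-(n:ℂ)+k) * (-(n:ℂ)+1+k) := by
    have h1 := poch_shift (-(n:ℂ)) k
    have h2 := poch_shift (-(n:ℂ)+1) k
    rw [show (-(n:ℂ)+1)+1 = -(n:ℂ)+2 from by ring] at h2
    linear_combination (-(n:ℂ)+1+(k:ℂ)) * h1 + (-(n:ℂ)) * h2
  have hY := poch_shift ((-(n:ℂ)+b+1)/2) k
  have hYne : poch ((-(n:ℂ)+b+1)/2 + 1) k ≠ 0 := by
    intro h0
    rw [h0, mul_zero] at hY
    exact (mul_ne_zero hPs hsk) hY.symm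
  unfold wG wT
  rw [hc2]
  rw [show -((n:ℂ)-2) = -(n:ℂ)+2 from by ring,
      show (-(n:ℂ)+2+b+1)/2 = (-(n:ℂ)+b+1)/2 + 1 from by ring]
  rw [poch_succ (-(n:ℂ)) k, poch_succ b k, poch_succ c k,
      poch_succ ((-(n:ℂ)+b+1)/2) k, poch_succ (2*c) k, Nat.factorial_succ]
  push_cast
  set N := (n:ℂ) with hNdef
  set K := (k:ℂ) with hKdef
  set S := (-N + b + 1) / 2 with hSdef
  set F := (k.factorial : ℂ) with hFdef
  set Pm := poch (-N) k with hPmdef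
  set Pb := poch b k with hPbdef
  set Pc := poch c k with hPcdef
  set Ps := poch S k with hPsdef
  set Q := poch (2 * c) k with hQdef
  set X := poch (-N + 2) k with hXdef
  set Y := poch (S + 1) k with hYdef
  have hDD : -N * (-N + 1) * S * N * (K + 1) * (S + K) * (2 * c + K) * (Ps * Q * F) ≠ 0 := by
    refine mul_ne_zero (mul_ne_zero (mul_ne_zero (mul_ne_zero (mul_ne_zero (mul_ne_zero
      (mul_ne_zero (neg_ne_zero.mpr hN0) hN1) hs) hN0) hk1) hsk) hck)
      (mul_ne_zero (mul_ne_zero hPs hQ) hfac)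
  have hv1 : Y * Q * F ≠ 0 := mul_ne_zero (mul_ne_zero hYne hQ) hfac
  have hv2 : Ps * Q * F ≠ 0 := mul_ne_zero (mul_ne_zero hPs hQ) hfac
  have hv3 : Ps * (S + K) * (Q * (2 * c + K)) * ((K + 1) * F) ≠ 0 :=
    mul_ne_zero (mul_ne_zero (mul_ne_zero hPs hsk) (mul_ne_zero hQ hck)) (mul_ne_zero hk1 hfac)
  have E1 : (b - 2 * c - N + 1) * (N - 1) * (X * Pb * Pc / (Y * Q * F))
      = (b - 2 * c - N + 1) * (N - 1) * (Pm * (-N + K) * (-N + 1 + K)) * Pb * Pc * S * S * N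
          * (K + 1) * (2 * c + K)
        / (-N * (-N + 1) * S * N * (K + 1) * (S + K) * (2 * c + K) * (Ps * Q * F)) := by
    rw [← mul_div_assoc, div_eq_div_iff hv1 hDD]
    linear_combination
      ((b - 2 * c - N + 1) * (N - 1) * Pb * Pc * S * N * (K + 1) * (S + K) * (2 * c + K) * Ps * Q * F) * hX
      - ((b - 2 * c - N + 1) * (N - 1) * (Pm * (-N + K) * (-N + 1 + K)) * Pb * Pc * N * (K + 1) * (2 * c + K) * Q * F * S) * hY
  have E2 : (b - N + 1) * (2 * c + N - 1) * (Pm * Pb * Pc / (Ps * Q * F))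
      = (b - N + 1) * (2 * c + N - 1) * Pm * Pb * Pc * (-N) * (-N + 1) * S * N * (K + 1)
          * (S + K) * (2 * c + K)
        / (-N * (-N + 1) * S * N * (K + 1) * (S + K) * (2 * c + K) * (Ps * Q * F)) := by
    rw [← mul_div_assoc, div_eq_div_iff hv2 hDD]
    ring
  have E3 : (b - N + 1) * (K + 1) * (2 * c + (K + 1) - 1) / N *
        (Pm * (-N + K) * (Pb * (b + K)) * (Pc * (c + K)) /
          (Ps * (S + K) * (Q * (2 * c + K)) * ((K + 1) * F)))
      = (b - N + 1) * (K + 1) * (2 * c + (K + 1) - 1)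
          * (Pm * (-N + K) * (Pb * (b + K)) * (Pc * (c + K))) * (-N) * (-N + 1) * S
        / (-N * (-N + 1) * S * N * (K + 1) * (S + K) * (2 * c + K) * (Ps * Q * F)) := by
    rw [div_mul_div_comm, div_eq_div_iff (mul_ne_zero hN0 hv3) hDD]
    ring
  have E4 : (b - N + 1) * K * (2 * c + K - 1) / N * (Pm * Pb * Pc / (Ps * Q * F))
      = (b - N + 1) * K * (2 * c + K - 1) * Pm * Pb * Pc * (-N) * (-N + 1) * S * (K + 1)
          * (S + K) * (2 * c + K)
        / (-N * (-N + 1) * S * N * (K + 1) * (S + K) * (2 * c + K) * (Ps * Q * F)) := by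
    rw [div_mul_div_comm, div_eq_div_iff (mul_ne_zero hN0 hv2) hDD]
    ring
  rw [E1, E2, E3, E4, div_sub_div_same, div_sub_div_same]
  congr 1
  rw [hSdef]
  ring

lemma wT_eq_zero (b c : ℂ) (m k : ℕ) (hm : m < k) : wT b c m k = 0 := by
  unfold wT
  rw [poch_neg_nat_eq_zero m k hm, zero_mul, zero_mul, zero_div]

/-- Two-fold recurrence for the Watson sum. -/
theorem watson_recurrence (b c : ℂ)
    (h : ∀ n : ℕ, ∀ k ≤ n,
      poch ((-(n : ℂ) + b + 1) / 2) k ≠ 0 ∧ poch (2 * c) k ≠ 0) :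
    ∀ n : ℕ, 2 ≤ n →
      (b - 2 * c - (n : ℂ) + 1) * ((n : ℂ) - 1) * watsonSum b c (n - 2) -
        (b - (n : ℂ) + 1) * (2 * c + (n : ℂ) - 1) * watsonSum b c n = 0 := by
  intro n hn
  have hN0 : (n:ℂ) ≠ 0 := Nat.cast_ne_zero.mpr (by omega)
  have hW : ∀ m : ℕ, watsonSum b c m = ∑ k ∈ Finset.range (m+1), wT b c m k := fun m => rfl
  have hW2 : watsonSum b c (n-2) = ∑ k ∈ Finset.range (n+1), wT b c (n-2) k := by
    rw [hW (n-2)]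
    apply Finset.sum_subset (Finset.range_subset_range.mpr (by omega))
    intro k hk1 hk2
    apply wT_eq_zero
    simp only [Finset.mem_range] at hk1 hk2
    omega
  rw [hW n, hW2, Finset.mul_sum, Finset.mul_sum, ← Finset.sum_sub_distrib,
    Finset.sum_range_succ]
  have hs : (-(n:ℂ)+b+1)/2 ≠ 0 := by
    have h1 := (h n 1 (by omega)).1
    rwa [poch_one] at h1
  have hsplit : ∑ k ∈ Finset.range n,
      ((b - 2 * c - (n:ℂ) + 1) * ((n:ℂ) - 1) * wT b c (n-2) k
        - (b - (n:ℂ) + 1) * (2 * c + (n:ℂ) - 1) * wT b c n k)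
      = ∑ k ∈ Finset.range n, (wG b c n (k+1) - wG b c n k) := by
    apply Finset.sum_congr rfl
    intro k hk
    have hkn : k + 1 ≤ n := Finset.mem_range.mp hk
    exact wkey b c n k hn hkn (h n k (by omega)).1 (h n k (by omega)).2
      (h n (k+1) hkn).1 (h n (k+1) hkn).2 hs
  rw [hsplit, Finset.sum_range_sub]
  have hG0 : wG b c n 0 = 0 := by
    unfold wG
    simp
  have hlast : wT b c (n-2) n = 0 := wT_eq_zero b c (n-2) n (by omega)
  have hGn : (b - (n:ℂ) + 1) * (2 * c + (n:ℂ) - 1) * wT b c n n = wG b c n n := by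
    unfold wG
    have e : (b - (n:ℂ) + 1) * (n:ℂ) * (2 * c + (n:ℂ) - 1) / (n:ℂ)
        = (b - (n:ℂ) + 1) * (2 * c + (n:ℂ) - 1) := by
      field_simp
    rw [e]
  rw [hG0, hlast, hGn]
  ring
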